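/- Consider the uniform-profit instance and the (1+1) EA with n ≥ 2. Let x ∈ {0,1}^n be a feasible solution with |x|_1 = ℓ, and let Y = { y ∈ {0,1}^n : |y|_1 = ℓ, y has Hamming distance exactly 2 from x, and f(y) ⪰ f(x) } be the set of same-level accepted two-bit-flip offspring of x. Then every y ∈ Y satisfies s(y) ≤ s(x), each y ∈ Y is produced from x by one standard-bit mutation with probability (1/n)²·(1 − 1/n)^{n−2}, and Σ_{y ∈ Y} (1/n)²·(1 − 1/n)^{n−2}·(s(x) − s(y)) ≥ (s(x) − s_ℓ^b)/(e·n²). -/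

import Mathlib

open Finset
open scoped ENNReal

noncomputable section

/-- Number of one-bits (selected items) of a solution. -/
def numOnes (K m : ℕ) (x : Fin K → Fin m → Bool) : ℕ :=
  ∑ i, ∑ j, if x i j then 1 else 0

/-- Covariance contribution `2c·Σᵢ Σ_{j1<j2} x_{ij1}·x_{ij2}` of a solution. -/
def cova (K m : ℕ) (c : ℝ) (x : Fin K → Fin m → Bool) : ℝ :=
  2 * c * ∑ i, ∑ p ∈ Finset.univ.filter (fun p : Fin m × Fin m => p.1 < p.2),
      (if x i p.1 then (1 : ℝ) else 0) * (if x i p.2 then (1 : ℝ) else 0)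

/-- Expected weight `E[W(x)] = a·|x|₁`. -/
def expWeight (K m : ℕ) (a : ℝ) (x : Fin K → Fin m → Bool) : ℝ :=
  a * (numOnes K m x : ℝ)

/-- Variance `Var[W(x)] = d·|x|₁ + 2c·Σᵢ Σ_{j1<j2} x_{ij1}·x_{ij2}`. -/
def varWeight (K m : ℕ) (d c : ℝ) (x : Fin K → Fin m → Bool) : ℝ :=
  d * (numOnes K m x : ℝ) + cova K m c x

/-- Chebyshev surrogate `β(x) = Var[W(x)] / (Var[W(x)] + (B − E[W(x)])²)`. -/
def chebBeta (K m : ℕ) (a d c B : ℝ) (x : Fin K → Fin m → Bool) : ℝ :=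
  varWeight K m d c x / (varWeight K m d c x + (B - expWeight K m a x) ^ 2)

/-- A solution is feasible if `E[W(x)] < B` and `β(x) ≤ α`. -/
def feasible (K m : ℕ) (a d c B α : ℝ) (x : Fin K → Fin m → Bool) : Prop :=
  expWeight K m a x < B ∧ chebBeta K m a d c B x ≤ α

/-- `β'(x) = β(x)` if `E[W(x)] < B`, and `β'(x) = 1 + E[W(x)] − B` otherwise. -/
def betaPrime (K m : ℕ) (a d c B : ℝ) (x : Fin K → Fin m → Bool) : ℝ :=
  if expWeight K m a x < B then chebBeta K m a d c B x else 1 + expWeight K m a x - B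

/-- Total profit `p(x) = Σᵢⱼ p_{ij}·x_{ij}`. -/
def profitOf (K m : ℕ) (profit : Fin K → Fin m → ℝ) (x : Fin K → Fin m → Bool) : ℝ :=
  ∑ i, ∑ j, if x i j then profit i j else 0

/-- `p'(x) = −1` if `β'(x) > α`, and `p'(x) = p(x)` otherwise. -/
def pPrime (K m : ℕ) (a d c B α : ℝ) (profit : Fin K → Fin m → ℝ)
    (x : Fin K → Fin m → Bool) : ℝ :=
  if α < betaPrime K m a d c B x then -1 else profitOf K m profit x

/-- Lexicographic fitness dominance: `f(y) ⪰ f(x)` iff `p'(y) > p'(x)`, or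
`p'(y) = p'(x)` and `β'(y) ≤ β'(x)`. -/
def fge (K m : ℕ) (a d c B α : ℝ) (profit : Fin K → Fin m → ℝ)
    (y x : Fin K → Fin m → Bool) : Prop :=
  pPrime K m a d c B α profit x < pPrime K m a d c B α profit y ∨
    (pPrime K m a d c B α profit y = pPrime K m a d c B α profit x ∧
      betaPrime K m a d c B y ≤ betaPrime K m a d c B x)

/-- Hamming distance between two solutions. -/
def hdist (K m : ℕ) (x y : Fin K → Fin m → Bool) : ℕ :=
  ∑ i, ∑ j, if x i j = y i j then 0 else 1

/-- Standard-bit mutation of the (1+1) EA: each bit flips independently with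
probability `1/n`, so `y` is produced from `x` with probability
`(1/n)^{H(x,y)}·(1 − 1/n)^{n − H(x,y)}`. -/
def mutEA (K m : ℕ) (x y : Fin K → Fin m → Bool) : ℝ≥0∞ :=
  (1 / (K * m : ℝ≥0∞)) ^ hdist K m x y *
    (1 - 1 / (K * m : ℝ≥0∞)) ^ (K * m - hdist K m x y)

/-- RLS mutation: with probability `1/2` flip one uniformly random bit, with probability
`1/2` flip a uniformly random pair of distinct bits; so a one-bit-flip neighbour is
produced with probability `1/(2n)` and a two-bit-flip neighbour with probability
`1/(n(n−1))`. -/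
def mutRLS (K m : ℕ) (x y : Fin K → Fin m → Bool) : ℝ≥0∞ :=
  if hdist K m x y = 1 then 1 / (2 * (K * m : ℝ≥0∞))
  else if hdist K m x y = 2 then 1 / ((K * m : ℝ≥0∞) * ((K * m : ℝ≥0∞) - 1))
  else 0

open scoped Classical in
/-- One-step transition probability of an elitist algorithm with mutation distribution
`mutD` and acceptance relation `acc y x` (= "`f(y) ⪰ f(x)`"): the offspring is accepted
iff `acc`, otherwise the algorithm stays at `x`. -/
def stepP (K m : ℕ)
    (mutD : (Fin K → Fin m → Bool) → (Fin K → Fin m → Bool) → ℝ≥0∞)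
    (acc : (Fin K → Fin m → Bool) → (Fin K → Fin m → Bool) → Prop)
    (x y : Fin K → Fin m → Bool) : ℝ≥0∞ :=
  (if acc y x then mutD x y else 0) +
    (if y = x then ∑ z, (if acc z x then 0 else mutD x z) else 0)

open scoped Classical in
/-- `hitVec K m P A x₀ t y` is the probability that the Markov chain with transition
matrix `P` started at `x₀` has not visited the target set `A` during the first `t` steps
and is currently at `y`. -/
def hitVec (K m : ℕ)
    (P : (Fin K → Fin m → Bool) → (Fin K → Fin m → Bool) → ℝ≥0∞)
    (A : (Fin K → Fin m → Bool) → Prop) (x₀ : Fin K → Fin m → Bool) :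
    ℕ → (Fin K → Fin m → Bool) → ℝ≥0∞
  | 0 => fun y => if y = x₀ ∧ ¬ A y then 1 else 0
  | (t + 1) => fun y => if A y then 0 else ∑ x, hitVec K m P A x₀ t x * P x y

/-- Expected hitting time `E[min {t : X_t ∈ A}]` of the target set `A` for the Markov
chain with transition matrix `P` started at `x₀`, computed as `Σ_{t≥0} Pr(T > t)`. -/
def expHitTime (K m : ℕ)
    (P : (Fin K → Fin m → Bool) → (Fin K → Fin m → Bool) → ℝ≥0∞)
    (A : (Fin K → Fin m → Bool) → Prop) (x₀ : Fin K → Fin m → Bool) : ℝ≥0∞ :=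
  ∑' t : ℕ, ∑ y, hitVec K m P A x₀ t y

/-- Covariance `s_ℓ^b` of a balanced solution with `ℓ` one-bits: with `q = ⌊ℓ/K⌋` and
`t = ℓ − qK`, it is `c·[(K − t)·q(q − 1) + t·(q + 1)q]`. -/
def balCov (K : ℕ) (c : ℝ) (ℓ : ℕ) : ℝ :=
  c * (((K - (ℓ - (ℓ / K) * K)) * ((ℓ / K) * (ℓ / K - 1)) +
        (ℓ - (ℓ / K) * K) * ((ℓ / K + 1) * (ℓ / K)) : ℕ) : ℝ)

/-- The solution obtained from `y` by setting bit `(i, j)` to one. -/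
def flipUp (K m : ℕ) (y : Fin K → Fin m → Bool) (i : Fin K) (j : Fin m) :
    Fin K → Fin m → Bool :=
  fun i' j' => if i' = i ∧ j' = j then true else y i' j'

end


section Helpers
open Finset

lemma pair_sq {m : ℕ} (a : Fin m → ℝ) :
    2 * ∑ p ∈ Finset.univ.filter (fun p : Fin m × Fin m => p.1 < p.2), a p.1 * a p.2
      + ∑ j, a j * a j = (∑ j, a j) * (∑ j, a j) := by
  classical
  have h := Fintype.sum_mul_sum a a
  rw [h, ← Finset.sum_product']
  have hsplit := Finset.sum_filter_add_sum_filter_not (Finset.univ ×ˢ Finset.univ)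
    (fun p : Fin m × Fin m => p.1 < p.2) (fun p => a p.1 * a p.2)
  rw [← hsplit]
  have hsplit2 := Finset.sum_filter_add_sum_filter_not
    ((Finset.univ ×ˢ Finset.univ).filter (fun p : Fin m × Fin m => ¬ p.1 < p.2))
    (fun p : Fin m × Fin m => p.2 < p.1) (fun p => a p.1 * a p.2)
  rw [Finset.filter_filter, Finset.filter_filter] at hsplit2
  rw [← hsplit2]
  have h1 : ∑ p ∈ (Finset.univ ×ˢ Finset.univ).filter
      (fun p : Fin m × Fin m => ¬ p.1 < p.2 ∧ p.2 < p.1), a p.1 * a p.2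
      = ∑ p ∈ (Finset.univ ×ˢ Finset.univ).filter
        (fun p : Fin m × Fin m => p.1 < p.2), a p.1 * a p.2 := by
    apply Finset.sum_nbij' (fun p => Prod.swap p) (fun p => Prod.swap p) <;>
      simp +contextual [mul_comm, le_of_lt]
  have h2 : (Finset.univ ×ˢ Finset.univ).filter
      (fun p : Fin m × Fin m => ¬ p.1 < p.2 ∧ ¬ p.2 < p.1)
      = Finset.univ.image (fun j : Fin m => (j, j)) := by
    ext p; simp [Prod.ext_iff]; omega
  have h3 : ∑ p ∈ (Finset.univ ×ˢ Finset.univ).filter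
      (fun p : Fin m × Fin m => ¬ p.1 < p.2 ∧ ¬ p.2 < p.1), a p.1 * a p.2
      = ∑ j, a j * a j := by
    rw [h2]
    exact Finset.sum_image (fun u _ v _ h => congrArg Prod.fst h)
  rw [h1, h3]
  have : (Finset.univ ×ˢ Finset.univ).filter (fun p : Fin m × Fin m => p.1 < p.2)
      = Finset.univ.filter (fun p : Fin m × Fin m => p.1 < p.2) := by
    rw [Finset.univ_product_univ]
  rw [this]; ring

open scoped Classical in
def load (K m : ℕ) (x : Fin K → Fin m → Bool) (i : Fin K) : ℕ :=
  (Finset.univ.filter (fun j => x i j = true)).card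

def swapSol (K m : ℕ) (x : Fin K → Fin m → Bool) (i : Fin K) (j : Fin m)
    (μ : Fin K) (j' : Fin m) : Fin K → Fin m → Bool :=
  fun a b => if a = i ∧ b = j then false else if a = μ ∧ b = j' then true else x a b

variable {K m : ℕ} {x : Fin K → Fin m → Bool} {i μ : Fin K} {j j' : Fin m}

lemma load_le (x : Fin K → Fin m → Bool) (i : Fin K) : load K m x i ≤ m := by
  classical
  simpa [load] using Finset.card_filter_le Finset.univ (fun j => x i j = true)

lemma sum_ind (x : Fin K → Fin m → Bool) (i : Fin K) :
    ∑ j, (if x i j then (1:ℝ) else 0) = (load K m x i : ℝ) := by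
  classical
  simp [load, Finset.sum_ite_eq, Finset.sum_boole]

lemma load_swap (hij : x i j = true) (hj' : x μ j' = false) (hiμ : i ≠ μ) (a : Fin K) :
    load K m (swapSol K m x i j μ j') a =
      if a = i then load K m x i - 1 else if a = μ then load K m x μ + 1 else load K m x a := by
  classical
  by_cases hai : a = i
  · subst hai
    have hset : (Finset.univ.filter (fun b => swapSol K m x a j μ j' a b = true))
        = (Finset.univ.filter (fun b => x a b = true)).erase j := by
      ext b; by_cases hb : b = j <;> simp [swapSol, hb, hiμ]
    simp only [load, hset, if_pos rfl]
    rw [Finset.card_erase_of_mem (by simp [hij])]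
    simp
  · by_cases haμ : a = μ
    · subst haμ
      have hset : (Finset.univ.filter (fun b => swapSol K m x i j a j' a b = true))
          = insert j' (Finset.univ.filter (fun b => x a b = true)) := by
        ext b; by_cases hb : b = j' <;> simp [swapSol, hb, hai]
      simp only [load, hset, if_neg hai, if_pos rfl]
      rw [Finset.card_insert_of_notMem (by simp [hj'])]
      simp
    · have hset : (Finset.univ.filter (fun b => swapSol K m x i j μ j' a b = true))
          = (Finset.univ.filter (fun b => x a b = true)) := by
        ext b; simp [swapSol, hai, haμ]
      simp only [load, hset, if_neg hai, if_neg haμ]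

lemma numOnes_eq (K m : ℕ) (x : Fin K → Fin m → Bool) : numOnes K m x = ∑ i, load K m x i := by
  classical
  unfold numOnes load
  congr 1; ext i
  rw [Finset.card_filter]

lemma sum_loads_split (f : ℕ → ℝ) (k : Fin K → ℕ) (hiμ : i ≠ μ) :
    ∑ a, f (k a) = f (k i) + f (k μ)
      + ∑ a ∈ (Finset.univ.erase i).erase μ, f (k a) := by
  classical
  rw [← Finset.sum_erase_add Finset.univ _ (Finset.mem_univ i)]
  rw [← Finset.sum_erase_add (Finset.univ.erase i) _
    (Finset.mem_erase.2 ⟨Ne.symm hiμ, Finset.mem_univ μ⟩)]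
  rw [Finset.erase_right_comm]
  ring

lemma cova_eq (c : ℝ) (x : Fin K → Fin m → Bool) :
    cova K m c x = c * ∑ i, ((load K m x i : ℝ) * (load K m x i : ℝ) - load K m x i) := by
  classical
  unfold cova
  rw [Finset.mul_sum, Finset.mul_sum]
  congr 1; ext i
  have h := pair_sq (fun j => if x i j then (1:ℝ) else 0)
  have hsq : ∑ j, (if x i j then (1:ℝ) else 0) * (if x i j then (1:ℝ) else 0)
      = (load K m x i : ℝ) := by
    rw [← sum_ind x i]; congr 1; ext j; by_cases h : x i j <;> simp [h]
  rw [hsq, sum_ind x i] at h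
  linear_combination c * h

lemma cova_nonneg (c : ℝ) (hc : 0 ≤ c) (x : Fin K → Fin m → Bool) :
    0 ≤ cova K m c x := by
  unfold cova
  apply mul_nonneg (by linarith)
  apply Finset.sum_nonneg; intro i _
  apply Finset.sum_nonneg; intro p _
  positivity

lemma numOnes_swap (hij : x i j = true) (hj' : x μ j' = false) (hiμ : i ≠ μ) :
    numOnes K m (swapSol K m x i j μ j') = numOnes K m x := by
  classical
  have h1 : 1 ≤ load K m x i := by
    apply Finset.card_pos.2 ⟨j, by simp [load, hij]⟩
  rw [numOnes_eq, numOnes_eq]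
  have e1 : ∀ (z : Fin K → Fin m → Bool), (∑ a, load K m z a) = ((∑ a, (load K m z a : ℝ)) : ℝ) := by
    intro z; push_cast; rfl
  have key : (∑ a, (load K m (swapSol K m x i j μ j') a : ℝ)) = ∑ a, (load K m x a : ℝ) := by
    rw [sum_loads_split (fun n => (n : ℝ)) _ hiμ, sum_loads_split (fun n => (n : ℝ)) (load K m x) hiμ]
    have ei : load K m (swapSol K m x i j μ j') i = load K m x i - 1 := by
      rw [load_swap hij hj' hiμ]; simp
    have eμ : load K m (swapSol K m x i j μ j') μ = load K m x μ + 1 := by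
      rw [load_swap hij hj' hiμ]; simp [Ne.symm hiμ]
    have eo : ∀ a ∈ (Finset.univ.erase i).erase μ,
        load K m (swapSol K m x i j μ j') a = load K m x a := by
      intro a ha
      rw [load_swap hij hj' hiμ]
      simp only [Finset.mem_erase] at ha
      simp [ha.1, ha.2.1]
    rw [ei, eμ, Finset.sum_congr rfl (fun a ha => by rw [eo a ha])]
    have : ((load K m x i - 1 : ℕ) : ℝ) = (load K m x i : ℝ) - 1 := by
      push_cast [h1]; ring
    rw [this]; push_cast; ring
  exact_mod_cast (e1 _).trans (key.trans (e1 _).symm)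

lemma swap_val_1 : swapSol K m x i j μ j' i j = false := by
  unfold swapSol; rw [if_pos ⟨rfl, rfl⟩]

lemma swap_val_2 (hiμ : i ≠ μ) : swapSol K m x i j μ j' μ j' = true := by
  unfold swapSol; rw [if_neg (fun h => hiμ h.1.symm), if_pos ⟨rfl, rfl⟩]

lemma swap_val_3 {a : Fin K} {b : Fin m} (h1 : ¬(a = i ∧ b = j)) (h2 : ¬(a = μ ∧ b = j')) :
    swapSol K m x i j μ j' a b = x a b := by
  unfold swapSol; rw [if_neg h1, if_neg h2]

lemma hdist_swap (hij : x i j = true) (hj' : x μ j' = false) (hiμ : i ≠ μ) :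
    hdist K m x (swapSol K m x i j μ j') = 2 := by
  classical
  unfold hdist
  have hpt : ∀ a b, (if x a b = swapSol K m x i j μ j' a b then 0 else 1)
      = (if a = i then (if b = j then 1 else 0) else 0)
        + (if a = μ then (if b = j' then 1 else 0) else 0) := by
    intro a b
    by_cases hai : a = i <;> by_cases haμ : a = μ <;>
      by_cases hbj : b = j <;> by_cases hbj' : b = j' <;>
      simp_all [swapSol]
  simp [hpt, Finset.sum_add_distrib, Finset.sum_ite_eq']

lemma cova_swap (c : ℝ) (hij : x i j = true) (hj' : x μ j' = false) (hiμ : i ≠ μ) :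
    cova K m c (swapSol K m x i j μ j')
      = cova K m c x - 2 * c * ((load K m x i : ℝ) - 1 - (load K m x μ : ℝ)) := by
  classical
  have h1 : 1 ≤ load K m x i := Finset.card_pos.2 ⟨j, by simp [load, hij]⟩
  rw [cova_eq, cova_eq]
  have g := fun (n : ℕ) => ((n : ℝ) * (n : ℝ) - (n : ℝ))
  rw [sum_loads_split (fun n => ((n : ℝ) * (n : ℝ) - (n : ℝ))) _ hiμ,
    sum_loads_split (fun n => ((n : ℝ) * (n : ℝ) - (n : ℝ))) (load K m x) hiμ]
  have ei : load K m (swapSol K m x i j μ j') i = load K m x i - 1 := by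
    rw [load_swap hij hj' hiμ]; simp
  have eμ : load K m (swapSol K m x i j μ j') μ = load K m x μ + 1 := by
    rw [load_swap hij hj' hiμ]; simp [Ne.symm hiμ]
  have eo : ∀ a ∈ (Finset.univ.erase i).erase μ,
      load K m (swapSol K m x i j μ j') a = load K m x a := by
    intro a ha
    rw [load_swap hij hj' hiμ]
    simp only [Finset.mem_erase] at ha
    simp [ha.1, ha.2.1]
  rw [ei, eμ, Finset.sum_congr rfl (fun a ha => by rw [eo a ha])]
  have hci : ((load K m x i - 1 : ℕ) : ℝ) = (load K m x i : ℝ) - 1 := by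
    push_cast [h1]; ring
  rw [hci]
  push_cast
  ring


lemma profit_one (K m : ℕ) (z : Fin K → Fin m → Bool) :
    profitOf K m (fun _ _ => 1) z = (numOnes K m z : ℝ) := by
  unfold profitOf numOnes
  push_cast
  rfl

lemma varWeight_nonneg {d c : ℝ} (hd : 0 ≤ d) (hc : 0 ≤ c) (z : Fin K → Fin m → Bool) :
    0 ≤ varWeight K m d c z := by
  unfold varWeight
  have := cova_nonneg (K := K) (m := m) c hc z
  positivity

lemma beta_le_iff {a d c B : ℝ} (hd : 0 ≤ d) (hc : 0 ≤ c)
    {y : Fin K → Fin m → Bool}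
    (hE : expWeight K m a y = expWeight K m a x) (hB : expWeight K m a x < B) :
    chebBeta K m a d c B y ≤ chebBeta K m a d c B x ↔
      varWeight K m d c y ≤ varWeight K m d c x := by
  unfold chebBeta
  rw [hE]
  set g := (B - expWeight K m a x) ^ 2 with hg
  have hgpos : 0 < g := by
    rw [hg]; exact pow_pos (sub_pos.2 hB) 2
  have hy := varWeight_nonneg (K := K) (m := m) hd hc y
  have hx' := varWeight_nonneg (K := K) (m := m) hd hc x
  rw [div_le_div_iff₀ (by linarith) (by linarith)]
  constructor
  · intro h; nlinarith
  · intro h; nlinarith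

lemma cova_le_of_fge {a d c B α : ℝ} (hd : 0 ≤ d) (hc : 0 ≤ c)
    {y : Fin K → Fin m → Bool}
    (hx : feasible K m a d c B α x) (hα1 : α < 1)
    (hnum : numOnes K m y = numOnes K m x)
    (hfge : fge K m a d c B α (fun _ _ => 1) y x) :
    cova K m c y ≤ cova K m c x := by
  have hE : expWeight K m a y = expWeight K m a x := by
    unfold expWeight; rw [hnum]
  have hβx : betaPrime K m a d c B x = chebBeta K m a d c B x := by
    unfold betaPrime; rw [if_pos hx.1]
  have hpx : pPrime K m a d c B α (fun _ _ => 1) x = (numOnes K m x : ℝ) := by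
    unfold pPrime
    rw [if_neg (by rw [hβx]; exact not_lt.2 hx.2), profit_one]
  rcases hfge with h | ⟨_, hβ⟩
  · exfalso
    rw [hpx] at h
    unfold pPrime at h
    split_ifs at h with h'
    · have : (0:ℝ) ≤ (numOnes K m x : ℝ) := Nat.cast_nonneg _
      linarith
    · rw [profit_one, hnum] at h; linarith
  · rw [hβx] at hβ
    have hβ1 : betaPrime K m a d c B y < 1 := lt_of_le_of_lt hβ (lt_of_le_of_lt hx.2 hα1)
    have hEy : expWeight K m a y < B := by
      by_contra hcon
      unfold betaPrime at hβ1
      rw [if_neg hcon] at hβ1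
      push_neg at hcon
      linarith
    have hβy : betaPrime K m a d c B y = chebBeta K m a d c B y := by
      unfold betaPrime; rw [if_pos hEy]
    rw [hβy] at hβ
    have hvar := (beta_le_iff (x := x) hd hc hE hx.1).1 hβ
    unfold varWeight at hvar
    rw [hnum] at hvar
    linarith

lemma fge_of_cova_le {a d c B α : ℝ} (hd : 0 ≤ d) (hc : 0 ≤ c)
    {y : Fin K → Fin m → Bool}
    (hx : feasible K m a d c B α x)
    (hnum : numOnes K m y = numOnes K m x)
    (hcov : cova K m c y ≤ cova K m c x) :
    fge K m a d c B α (fun _ _ => 1) y x := by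
  have hE : expWeight K m a y = expWeight K m a x := by
    unfold expWeight; rw [hnum]
  have hEy : expWeight K m a y < B := hE ▸ hx.1
  have hvar : varWeight K m d c y ≤ varWeight K m d c x := by
    unfold varWeight; rw [hnum]; linarith
  have hβ : chebBeta K m a d c B y ≤ chebBeta K m a d c B x :=
    (beta_le_iff (x := x) hd hc hE hx.1).2 hvar
  have hβx : betaPrime K m a d c B x = chebBeta K m a d c B x := by
    unfold betaPrime; rw [if_pos hx.1]
  have hβy : betaPrime K m a d c B y = chebBeta K m a d c B y := by
    unfold betaPrime; rw [if_pos hEy]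
  have hβ' : betaPrime K m a d c B y ≤ betaPrime K m a d c B x := by
    rw [hβx, hβy]; exact hβ
  right
  constructor
  · unfold pPrime
    rw [if_neg (not_lt.2 (le_trans hβ' (hβx ▸ hx.2))),
      if_neg (by rw [hβx]; exact not_lt.2 hx.2), profit_one, profit_one, hnum]
  · exact hβ'

lemma exp_bound (n : ℕ) (hn : 2 ≤ n) :
    Real.exp (-1) ≤ (1 - 1/(n:ℝ)) ^ (n - 2) := by
  have hn2 : (2:ℝ) ≤ (n:ℝ) := by exact_mod_cast hn
  have hpos : (0:ℝ) < (n:ℝ) - 1 := by linarith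
  set s : ℝ := 1/((n:ℝ) - 1) with hs
  have hspos : 0 < s := by positivity
  have h1 : Real.exp (-s) ≤ 1 - 1/(n:ℝ) := by
    have h2 : s + 1 ≤ Real.exp s := Real.add_one_le_exp s
    rw [Real.exp_neg]
    rw [inv_le_comm₀ (Real.exp_pos s) (by
      have : (0:ℝ) < 1 - 1/(n:ℝ) := by
        rw [sub_pos]; rw [div_lt_one (by linarith)]; linarith
      exact this)]
    have h3 : (1 - 1/(n:ℝ))⁻¹ = 1 + s := by
      rw [hs]
      field_simp
      ring
    rw [h3]
    linarith
  have h4 : Real.exp (-s) ^ (n-2) ≤ (1 - 1/(n:ℝ)) ^ (n-2) := by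
    apply pow_le_pow_left₀ (Real.exp_pos _).le h1
  refine le_trans ?_ h4
  rw [← Real.exp_nat_mul]
  apply Real.exp_le_exp.2
  have hcast : ((n - 2 : ℕ) : ℝ) = (n:ℝ) - 2 := by
    push_cast [hn]; ring
  rw [hcast]
  have hkey : ((n:ℝ) - 2) * s ≤ 1 := by
    rw [hs, mul_one_div, div_le_one hpos]; linarith
  nlinarith [hkey]

lemma arith_key (K m : ℕ) (hK : 1 ≤ K) (c : ℝ) (hc : 0 ≤ c) (k : Fin K → ℕ)
    (hkm : ∀ i, k i ≤ m) (μ : Fin K) (hμ : ∀ i, k μ ≤ k i) :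
    c * (∑ i, ((k i : ℝ) * (k i : ℝ) - (k i : ℝ))) - balCov K c (∑ i, k i)
      ≤ ∑ i, (if k μ + 2 ≤ k i then
          2 * c * (((k i : ℝ)) * ((m : ℝ) - (k μ : ℝ))) * ((k i : ℝ) - 1 - (k μ : ℝ)) else 0) := by
  classical
  have per : ∀ i, c * (((k i : ℝ) - (k μ : ℝ)) * ((k i : ℝ) - (k μ : ℝ) - 1))
      ≤ (if k μ + 2 ≤ k i then
          2 * c * (((k i : ℝ)) * ((m : ℝ) - (k μ : ℝ))) * ((k i : ℝ) - 1 - (k μ : ℝ)) else 0) := by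
    intro i
    have hkr : ((k μ : ℝ)) ≤ (k i : ℝ) := by exact_mod_cast hμ i
    have hkmr : (k i : ℝ) ≤ (m : ℝ) := by exact_mod_cast hkm i
    split_ifs with h
    · have h2 : ((k μ : ℝ)) + 2 ≤ (k i : ℝ) := by exact_mod_cast h
      have g1 : (0:ℝ) ≤ (k i : ℝ) - (k μ : ℝ) - 1 := by linarith
      have g2 : (0:ℝ) ≤ 2 * (k i : ℝ) * ((m:ℝ) - (k μ : ℝ)) - ((k i : ℝ) - (k μ : ℝ)) := by
        have hX0 : (0:ℝ) ≤ (k i : ℝ) := Nat.cast_nonneg _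
        have hR0 : (0:ℝ) ≤ ((k μ : ℕ) : ℝ) := Nat.cast_nonneg _
        nlinarith
      nlinarith [mul_nonneg hc (mul_nonneg g1 g2)]
    · have h2 : (k i : ℝ) ≤ ((k μ : ℝ)) + 1 := by
        have : k i ≤ k μ + 1 := by omega
        exact_mod_cast this
      have g1 : (0:ℝ) ≤ (k i : ℝ) - (k μ : ℝ) := by linarith
      have g2 : (0:ℝ) ≤ ((k μ : ℝ)) + 1 - (k i : ℝ) := by linarith
      nlinarith [mul_nonneg (mul_nonneg hc g1) g2]
  have hsum : ∑ i, c * (((k i : ℝ) - (k μ : ℝ)) * ((k i : ℝ) - (k μ : ℝ) - 1))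
      ≤ ∑ i, (if k μ + 2 ≤ k i then
          2 * c * (((k i : ℝ)) * ((m : ℝ) - (k μ : ℝ))) * ((k i : ℝ) - 1 - (k μ : ℝ)) else 0) :=
    Finset.sum_le_sum (fun i _ => per i)
  refine le_trans ?_ hsum
  set ℓ := ∑ i, k i with hℓ
  obtain ⟨q, t, hKq, htK, hdiv, hmod⟩ :
      ∃ q t, K * q + t = ℓ ∧ t < K ∧ ℓ / K = q ∧ ℓ % K = t :=
    ⟨ℓ / K, ℓ % K, Nat.div_add_mod ℓ K, Nat.mod_lt _ (by omega), rfl, rfl⟩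
  have hrq : k μ ≤ q := by
    have hKr : K * k μ ≤ ℓ := by
      calc K * k μ = ∑ _i : Fin K, k μ := by simp [Finset.card_univ, mul_comm]
        _ ≤ ∑ i, k i := Finset.sum_le_sum (fun i _ => hμ i)
    have hKr' : k μ * K ≤ ℓ := by rw [Nat.mul_comm]; exact hKr
    have := (Nat.le_div_iff_mul_le (by omega : 0 < K)).2 hKr'
    omega
  have hLcast : (ℓ : ℝ) = ∑ i, (k i : ℝ) := by rw [hℓ]; push_cast; rfl
  have hbc : balCov K c ℓ
      = c * (((K:ℝ) - t) * ((q:ℝ)*(q:ℝ) - q) + (t:ℝ) * (((q:ℝ)+1)*(q:ℝ))) := by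
    unfold balCov
    have e1 : ℓ - ℓ / K * K = t := by
      rw [hdiv]
      have h' : q * K = K * q := Nat.mul_comm q K
      omega
    rw [e1, hdiv]
    have e2 : q * (q - 1) = q * q - q := by
      rcases Nat.eq_zero_or_pos q with h | h
      · simp [h]
      · have hqq : q ≤ q * q := Nat.le_mul_of_pos_left q h
        zify [h, hqq]
        ring
    rw [e2]
    have hqq : q ≤ q * q := by
      rcases Nat.eq_zero_or_pos q with h | h
      · simp [h]
      · exact Nat.le_mul_of_pos_left q h
    have hqq2 : q ≤ q ^ 2 := by rw [pow_two]; exact hqq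
    congr 1
    push_cast [Nat.cast_sub htK.le, Nat.cast_sub hqq, Nat.cast_sub hqq2]
    ring
  have expand : ∀ i, c * (((k i : ℝ) - (k μ : ℝ)) * ((k i : ℝ) - (k μ : ℝ) - 1))
      = c * ((k i : ℝ) * (k i : ℝ) - (k i : ℝ))
        - c * (2*((k μ : ℝ))*(k i : ℝ) - ((k μ : ℝ))*((k μ : ℝ)) - ((k μ : ℝ))) := by
    intro i; ring
  have hsum2 : ∑ i, (2*((k μ : ℝ))*(k i : ℝ) - ((k μ : ℝ))*((k μ : ℝ)) - ((k μ : ℝ)))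
      = 2*((k μ : ℝ))*(ℓ:ℝ) - (K:ℝ)*(((k μ : ℝ))*((k μ : ℝ))) - (K:ℝ)*((k μ : ℝ)) := by
    rw [Finset.sum_sub_distrib, Finset.sum_sub_distrib, ← Finset.mul_sum, ← hLcast]
    simp [Finset.card_univ]
    try ring
  have hsum3 : ∑ i, c * (((k i : ℝ) - (k μ : ℝ)) * ((k i : ℝ) - (k μ : ℝ) - 1))
      = c * (∑ i, ((k i : ℝ) * (k i : ℝ) - (k i : ℝ)))
        - c * (2*((k μ : ℝ))*(ℓ:ℝ) - (K:ℝ)*(((k μ : ℝ))*((k μ : ℝ))) - (K:ℝ)*((k μ : ℝ))) := by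
    rw [Finset.sum_congr rfl (fun i _ => expand i), Finset.sum_sub_distrib,
      ← Finset.mul_sum, ← Finset.mul_sum, hsum2]
  rw [hsum3] at hsum
  rw [hbc] at *
  have hcql : (ℓ:ℝ) = (K:ℝ)*(q:ℝ) + (t:ℝ) := by exact_mod_cast hKq.symm
  have hrq' : ((k μ : ℝ)) ≤ (q:ℝ) := by exact_mod_cast hrq
  have hK' : (1:ℝ) ≤ (K:ℝ) := by exact_mod_cast hK
  have ht0 : (0:ℝ) ≤ (t:ℝ) := Nat.cast_nonneg _
  have hkey : 2*((k μ : ℝ))*(ℓ:ℝ) - (K:ℝ)*(((k μ : ℝ))*((k μ : ℝ))) - (K:ℝ)*((k μ : ℝ))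
      ≤ ((K:ℝ) - t) * ((q:ℝ)*(q:ℝ) - q) + (t:ℝ) * (((q:ℝ)+1)*(q:ℝ)) := by
    rcases eq_or_lt_of_le hrq' with heq | hlt
    · rw [hcql, ← heq]; ring_nf; nlinarith [hK', ht0]
    · have h1 : ((k μ : ℝ)) + 1 ≤ (q:ℝ) := by
        have hn : k μ < q := by exact_mod_cast hlt
        have : k μ + 1 ≤ q := hn
        exact_mod_cast this
      have h2 : (0:ℝ) ≤ (q:ℝ) - (k μ : ℝ) - 1 := by linarith
      have h3 : (0:ℝ) ≤ (q:ℝ) - (k μ : ℝ) := by linarith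
      rw [hcql]
      nlinarith [mul_nonneg h3 (mul_nonneg (by linarith : (0:ℝ) ≤ (K:ℝ)) h2), mul_nonneg ht0 h3]
  have := mul_le_mul_of_nonneg_left hkey hc
  linarith [hsum]

end Helpers

open scoped Classical in
/-- Uniform-profit instance, (1+1) EA, `n = K·m ≥ 2`: for a feasible `x` with
`ℓ = |x|₁`, every same-level accepted two-bit-flip offspring `y` of `x` satisfies
`s(y) ≤ s(x)`, each such `y` is produced by one standard-bit mutation with probability
`(1/n)²(1 − 1/n)^{n−2}`, and the resulting expected one-step covariance decrease is at
least `(s(x) − s_ℓ^b)/(e·n²)`. -/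
theorem expected_covariance_drift (K m : ℕ) (hK : 1 ≤ K) (hm : 1 ≤ m) (hn : 2 ≤ K * m)
    (a d c B α : ℝ) (ha : 0 < a) (hd : 0 < d) (hc : 0 < c) (hB : 0 < B)
    (hα0 : 0 < α) (hα1 : α < 1)
    (x : Fin K → Fin m → Bool) (hx : feasible K m a d c B α x) :
    (∀ y ∈ Finset.univ.filter (fun y : Fin K → Fin m → Bool =>
        numOnes K m y = numOnes K m x ∧ hdist K m x y = 2 ∧
        fge K m a d c B α (fun _ _ => 1) y x),
      cova K m c y ≤ cova K m c x) ∧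
    (∀ y ∈ Finset.univ.filter (fun y : Fin K → Fin m → Bool =>
        numOnes K m y = numOnes K m x ∧ hdist K m x y = 2 ∧
        fge K m a d c B α (fun _ _ => 1) y x),
      mutEA K m x y =
        (1 / (K * m : ℝ≥0∞)) ^ 2 * (1 - 1 / (K * m : ℝ≥0∞)) ^ (K * m - 2)) ∧
    (cova K m c x - balCov K c (numOnes K m x)) / (Real.exp 1 * (K * m : ℝ) ^ 2) ≤
      ∑ y ∈ Finset.univ.filter (fun y : Fin K → Fin m → Bool =>
          numOnes K m y = numOnes K m x ∧ hdist K m x y = 2 ∧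
          fge K m a d c B α (fun _ _ => 1) y x),
        (1 / (K * m : ℝ)) ^ 2 * (1 - 1 / (K * m : ℝ)) ^ (K * m - 2) *
          (cova K m c x - cova K m c y) := by
  classical
  -- notation
  set Y := Finset.univ.filter (fun y : Fin K → Fin m → Bool =>
      numOnes K m y = numOnes K m x ∧ hdist K m x y = 2 ∧
      fge K m a d c B α (fun _ _ => 1) y x) with hY
  have part1 : ∀ y ∈ Y, cova K m c y ≤ cova K m c x := by
    intro y hy
    rw [hY, Finset.mem_filter] at hy
    exact cova_le_of_fge hd.le hc.le hx hα1 hy.2.1 hy.2.2.2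
  refine ⟨part1, ?_, ?_⟩
  · intro y hy
    rw [hY, Finset.mem_filter] at hy
    unfold mutEA
    rw [hy.2.2.1]
  -- Part 3
  have hKm2 : (2:ℝ) ≤ ((K*m : ℕ) : ℝ) := by exact_mod_cast hn
  have hnR : ((K*m : ℕ) : ℝ) = (K:ℝ) * (m:ℝ) := by push_cast; ring
  set nR : ℝ := (K:ℝ) * (m:ℝ) with hnRdef
  have hnRpos : 0 < nR := by rw [← hnR]; linarith
  set pterm : ℝ := (1 / nR) ^ 2 * (1 - 1 / nR) ^ (K * m - 2) with hpt
  have hone_sub : (0:ℝ) ≤ 1 - 1/nR := by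
    rw [sub_nonneg, div_le_one hnRpos]; rw [← hnR]; linarith
  have hpt_nonneg : 0 ≤ pterm := by
    rw [hpt]; positivity
  have hpt_lb : 1 / (Real.exp 1 * nR ^ 2) ≤ pterm := by
    have he := exp_bound (K*m) hn
    rw [Real.exp_neg, hnR] at he
    have heq : 1 / (Real.exp 1 * nR ^ 2) = (1/nR)^2 * (Real.exp 1)⁻¹ := by
      rw [div_pow, one_pow]
      field_simp
    rw [hpt, heq]
    exact mul_le_mul_of_nonneg_left he (by positivity)
  -- minimum-load group
  obtain ⟨μ, _, hμmin⟩ := Finset.exists_min_image (Finset.univ : Finset (Fin K))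
    (load K m x) ⟨⟨0, hK⟩, Finset.mem_univ _⟩
  have hμ : ∀ i, load K m x μ ≤ load K m x i := fun i => hμmin i (Finset.mem_univ i)
  -- the swap index set
  set A : Finset (Fin K × Fin m × Fin m) := Finset.univ.filter
    (fun p => load K m x μ + 2 ≤ load K m x p.1 ∧ x p.1 p.2.1 = true ∧ x μ p.2.2 = false)
    with hA
  set F : (Fin K × Fin m × Fin m) → (Fin K → Fin m → Bool) :=
    fun p => swapSol K m x p.1 p.2.1 μ p.2.2 with hF
  have hne : ∀ p ∈ A, p.1 ≠ μ := by
    intro p hp h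
    rw [hA, Finset.mem_filter] at hp
    rw [h] at hp
    omega
  have hmemY : ∀ p ∈ A, F p ∈ Y := by
    intro p hp
    have hne' := hne p hp
    rw [hA, Finset.mem_filter] at hp
    obtain ⟨-, hp1, hp2, hp3⟩ := hp
    have hnum := numOnes_swap hp2 hp3 hne'
    have hcast : ((load K m x μ : ℝ)) + 2 ≤ (load K m x p.1 : ℝ) := by exact_mod_cast hp1
    have hcov : cova K m c (F p) ≤ cova K m c x := by
      rw [hF]
      rw [cova_swap c hp2 hp3 hne']
      nlinarith [hc.le]
    rw [hY, Finset.mem_filter]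
    exact ⟨Finset.mem_univ _, hnum, hdist_swap hp2 hp3 hne',
      fge_of_cova_le hd.le hc.le hx hnum hcov⟩
  have hinj : ∀ p ∈ A, ∀ q ∈ A, F p = F q → p = q := by
    intro p hp q hq hpq
    have hnep := hne p hp
    have hneq := hne q hq
    rw [hA, Finset.mem_filter] at hp hq
    obtain ⟨-, -, hp2, hp3⟩ := hp
    obtain ⟨-, -, hq2, hq3⟩ := hq
    have h1 : p.1 = q.1 ∧ p.2.1 = q.2.1 := by
      by_contra h1
      have ev1 : F p p.1 p.2.1 = false := swap_val_1
      have ev2 : F q p.1 p.2.1 = true := by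
        show swapSol K m x q.1 q.2.1 μ q.2.2 p.1 p.2.1 = true
        rw [swap_val_3 h1 (fun h => hnep h.1)]
        exact hp2
      rw [hpq, ev2] at ev1
      exact Bool.noConfusion ev1
    have h2 : p.2.2 = q.2.2 := by
      by_contra h2
      have ev1 : F p μ p.2.2 = true := swap_val_2 hnep
      have ev2 : F q μ p.2.2 = false := by
        show swapSol K m x q.1 q.2.1 μ q.2.2 μ p.2.2 = false
        rw [swap_val_3 (fun h => hneq h.1.symm) (fun h => h2 h.2)]
        exact hp3
      rw [hpq, ev2] at ev1
      exact Bool.noConfusion ev1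
    exact Prod.ext h1.1 (Prod.ext h1.2 h2)
  -- counting
  have hcard_false : (Finset.univ.filter (fun j' => x μ j' = false)).card
      = m - load K m x μ := by
    have h1 : (Finset.univ.filter (fun j' => x μ j' = false))
        = (Finset.univ.filter (fun j' => ¬ (x μ j' = true))) := by
      apply Finset.filter_congr
      intro j' _
      simp
    rw [h1, Finset.filter_not, Finset.card_sdiff_of_subset (Finset.filter_subset _ _)]
    simp [load, Finset.card_univ]
  have hcount : ∀ (i : Fin K) (w : ℝ),
      (∑ j, ∑ j', (if x i j = true ∧ x μ j' = false then w else 0))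
        = (load K m x i : ℝ) * ((m:ℝ) - (load K m x μ : ℝ)) * w := by
    intro i w
    have inner : ∀ j, (∑ j', (if x i j = true ∧ x μ j' = false then w else 0))
        = (if x i j = true then ((m:ℝ) - (load K m x μ : ℝ)) * w else 0) := by
      intro j
      by_cases hj : x i j = true
      · simp only [hj, true_and, if_pos]
        rw [← Finset.sum_filter, Finset.sum_const, hcard_false]
        rw [nsmul_eq_mul, Nat.cast_sub (load_le x μ)]
      · simp [hj]
    rw [Finset.sum_congr rfl (fun j _ => inner j), ← Finset.sum_filter,
      Finset.sum_const, nsmul_eq_mul]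
    unfold load
    ring
  -- sum over A
  have hsumA : ∑ p ∈ A, (pterm * (cova K m c x - cova K m c (F p)))
      = pterm * ∑ i, (if load K m x μ + 2 ≤ load K m x i then
          2 * c * (((load K m x i : ℝ)) * ((m : ℝ) - (load K m x μ : ℝ)))
            * ((load K m x i : ℝ) - 1 - (load K m x μ : ℝ)) else 0) := by
    have hterm : ∀ p ∈ A, pterm * (cova K m c x - cova K m c (F p))
        = pterm * (2 * c * ((load K m x p.1 : ℝ) - 1 - (load K m x μ : ℝ))) := by
      intro p hp
      have hne' := hne p hp
      rw [hA, Finset.mem_filter] at hp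
      obtain ⟨-, -, hp2, hp3⟩ := hp
      rw [hF]
      rw [cova_swap c hp2 hp3 hne']
      ring
    rw [Finset.sum_congr rfl hterm]
    rw [hA, Finset.sum_filter]
    rw [Fintype.sum_prod_type]
    rw [Finset.mul_sum]
    apply Finset.sum_congr rfl
    intro i _
    rw [Fintype.sum_prod_type]
    by_cases hcond : load K m x μ + 2 ≤ load K m x i
    · rw [if_pos hcond]
      have hcr : ∀ (j : Fin m) (j' : Fin m),
          (if load K m x μ + 2 ≤ load K m x i ∧ x i j = true ∧ x μ j' = false then
            pterm * (2 * c * ((load K m x i : ℝ) - 1 - (load K m x μ : ℝ))) else 0)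
          = (if x i j = true ∧ x μ j' = false then
            pterm * (2 * c * ((load K m x i : ℝ) - 1 - (load K m x μ : ℝ))) else 0) := by
        intro j j'
        rw [if_congr (and_iff_right hcond) rfl rfl]
      rw [Finset.sum_congr rfl (fun j _ => Finset.sum_congr rfl (fun j' _ => hcr j j'))]
      rw [hcount i (pterm * (2 * c * ((load K m x i : ℝ) - 1 - (load K m x μ : ℝ))))]
      ring
    · rw [if_neg hcond]
      rw [mul_zero]
      apply Finset.sum_eq_zero
      intro j _
      apply Finset.sum_eq_zero
      intro j' _
      rw [if_neg (fun h => hcond h.1)]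
  -- assemble
  have harith := arith_key K m hK c hc.le (load K m x) (fun i => load_le x i) μ hμ
  rw [← cova_eq, ← numOnes_eq] at harith
  have hsub : A.image F ⊆ Y := by
    intro y hy
    obtain ⟨p, hp, rfl⟩ := Finset.mem_image.1 hy
    exact hmemY p hp
  have hterm_nonneg : ∀ y ∈ Y, 0 ≤ pterm * (cova K m c x - cova K m c y) := by
    intro y hy
    exact mul_nonneg hpt_nonneg (by linarith [part1 y hy])
  have step1 : ∑ y ∈ A.image F, (pterm * (cova K m c x - cova K m c y))
      ≤ ∑ y ∈ Y, (pterm * (cova K m c x - cova K m c y)) :=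
    Finset.sum_le_sum_of_subset_of_nonneg hsub (fun y hy _ => hterm_nonneg y hy)
  have step2 : ∑ y ∈ A.image F, (pterm * (cova K m c x - cova K m c y))
      = ∑ p ∈ A, (pterm * (cova K m c x - cova K m c (F p))) :=
    Finset.sum_image hinj
  have chain : pterm * (cova K m c x - balCov K c (numOnes K m x))
      ≤ ∑ y ∈ Y, (pterm * (cova K m c x - cova K m c y)) := by
    calc pterm * (cova K m c x - balCov K c (numOnes K m x))
        ≤ pterm * ∑ i, (if load K m x μ + 2 ≤ load K m x i then
            2 * c * (((load K m x i : ℝ)) * ((m : ℝ) - (load K m x μ : ℝ)))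
              * ((load K m x i : ℝ) - 1 - (load K m x μ : ℝ)) else 0) :=
          mul_le_mul_of_nonneg_left harith hpt_nonneg
      _ = ∑ p ∈ A, (pterm * (cova K m c x - cova K m c (F p))) := hsumA.symm
      _ = ∑ y ∈ A.image F, (pterm * (cova K m c x - cova K m c y)) := step2.symm
      _ ≤ ∑ y ∈ Y, (pterm * (cova K m c x - cova K m c y)) := step1
  -- final comparison
  have hgoal_rhs : ∑ y ∈ Y, ((1 / ((K:ℝ) * (m:ℝ))) ^ 2 * (1 - 1 / ((K:ℝ) * (m:ℝ))) ^ (K * m - 2)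
        * (cova K m c x - cova K m c y))
      = ∑ y ∈ Y, (pterm * (cova K m c x - cova K m c y)) := by
    apply Finset.sum_congr rfl
    intro y _
    rw [hpt, hnRdef]
  rw [hgoal_rhs]
  rcases le_or_gt (cova K m c x - balCov K c (numOnes K m x)) 0 with hD | hD
  · have h1 : (cova K m c x - balCov K c (numOnes K m x)) / (Real.exp 1 * ((K:ℝ)*(m:ℝ)) ^ 2) ≤ 0 := by
      apply div_nonpos_of_nonpos_of_nonneg hD
      positivity
    have h2 : 0 ≤ ∑ y ∈ Y, (pterm * (cova K m c x - cova K m c y)) :=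
      Finset.sum_nonneg hterm_nonneg
    linarith
  · have h1 : (cova K m c x - balCov K c (numOnes K m x)) / (Real.exp 1 * nR ^ 2)
        = (cova K m c x - balCov K c (numOnes K m x)) * (1 / (Real.exp 1 * nR ^ 2)) := by
      ring
    have h2 : (cova K m c x - balCov K c (numOnes K m x)) * (1 / (Real.exp 1 * nR ^ 2))
        ≤ (cova K m c x - balCov K c (numOnes K m x)) * pterm :=
      mul_le_mul_of_nonneg_left hpt_lb hD.le
    calc (cova K m c x - balCov K c (numOnes K m x)) / (Real.exp 1 * nR ^ 2)
        ≤ (cova K m c x - balCov K c (numOnes K m x)) * pterm := by rw [h1]; exact h2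
      _ = pterm * (cova K m c x - balCov K c (numOnes K m x)) := by ring
      _ ≤ ∑ y ∈ Y, (pterm * (cova K m c x - cova K m c y)) := chain
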